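/- arXiv:1912.05197 — 3 statements merged into one kernel-verified Lean document; each statement's English description precedes it below -/
import Mathlib

section
/- For every real number β ≥ 0, the matrix D⁻¹ − βL is non-singular. -/
open Matrix BigOperators

noncomputable section

/-- The Laplacian of a graph on `Fin n` whose edges carry `s × s` real matrix
weights `W i j`: the `(i,j)` block is `-(W i j)⁻¹` if `i ≠ j` are adjacent,
`0` if `i ≠ j` are non-adjacent, and `∑ k adjacent to i, (W i k)⁻¹` if `i = j`. -/
def lap (n s : ℕ) (G : SimpleGraph (Fin n)) [DecidableRel G.Adj]
    (W : Fin n → Fin n → Matrix (Fin s) (Fin s) ℝ) :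
    Matrix (Fin n × Fin s) (Fin n × Fin s) ℝ :=
  Matrix.of fun p q =>
    if p.1 = q.1 then (∑ k ∈ Finset.univ.filter (fun k => G.Adj p.1 k), (W p.1 k)⁻¹) p.2 q.2
    else if G.Adj p.1 q.1 then -((W p.1 q.1)⁻¹ p.2 q.2) else 0

/-- The inertia `(n₋, n₀, n₊)` of a real symmetric matrix: the numbers of
negative, zero and positive eigenvalues, counted with multiplicity.
(Junk value `(0,0,0)` on non-Hermitian matrices.) -/
def inertia {m : Type*} [Fintype m] [DecidableEq m] (A : Matrix m m ℝ) : ℕ × ℕ × ℕ :=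
  if hA : A.IsHermitian then
    ((Finset.univ.filter fun i => hA.eigenvalues i < 0).card,
     (Finset.univ.filter fun i => hA.eigenvalues i = 0).card,
     (Finset.univ.filter fun i => 0 < hA.eigenvalues i).card)
  else (0, 0, 0)

/-- A real matrix is negative definite. -/
def negDef {m : Type*} [Fintype m] (M : Matrix m m ℝ) : Prop :=
  M.IsHermitian ∧ ∀ x : m → ℝ, x ≠ 0 → x ⬝ᵥ M.mulVec x < 0

/-- A real matrix is negative semidefinite. -/
def negSemidef {m : Type*} [Fintype m] (M : Matrix m m ℝ) : Prop :=
  M.IsHermitian ∧ ∀ x : m → ℝ, x ⬝ᵥ M.mulVec x ≤ 0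

/-- The `ns × ns` block matrix `J` each of whose `n²` blocks is `I_s`. -/
def Jmat (n s : ℕ) : Matrix (Fin n × Fin s) (Fin n × Fin s) ℝ :=
  Matrix.of fun p q => if p.2 = q.2 then 1 else 0

/-- The `ns × s` matrix `U = e ⊗ I_s`, `e` the all-ones vector. -/
def Umat (n s : ℕ) : Matrix (Fin n × Fin s) (Fin s) ℝ :=
  Matrix.of fun p a => if p.2 = a then 1 else 0

/-!
Suppose `(D⁻¹ - β • L) x = 0` and put `z = L x`, so that `x = β • D z`. Then
`β (xᵀ L x) = xᵀ D⁻¹ x = β² (zᵀ D z)`. The left side is nonnegative, since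
`2 xᵀ L x = ∑_{i ~ j} (xᵢ - xⱼ)ᵀ Wᵢⱼ⁻¹ (xᵢ - xⱼ)`. The right side is nonpositive: the block sums
of `z = L x` vanish, and on such vectors a tree distance matrix is negative semidefinite. Indeed
`Dᵢⱼ` is the sum of the weights `W_e` of the edges `e` separating `i` from `j`, and if `y` is the
block sum of `z` over one side of the cut at `e`, the edge `e` contributes `-2 yᵀ W_e y`. Hence
`β (xᵀ L x) = 0`; if `β ≠ 0`, every `xᵢ - xⱼ` along an edge of `G` vanishes, so `z = L x = 0`,
and in all cases `x = β • D z = 0`.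
-/

open Function

namespace Matrix

theorem isUnit_det_inv_sub_smul {m : Type*} [Fintype m] [DecidableEq m]
    {D L : Matrix m m ℝ} (hD : IsUnit D.det) (hL : ∀ x, 0 ≤ x ⬝ᵥ L *ᵥ x)
    (hL₀ : ∀ x, x ⬝ᵥ L *ᵥ x = 0 → L *ᵥ x = 0) (hDL : ∀ x, L *ᵥ x ⬝ᵥ D *ᵥ (L *ᵥ x) ≤ 0)
    {β : ℝ} (hβ : 0 ≤ β) : IsUnit (D⁻¹ - β • L).det := by
  rw [isUnit_iff_ne_zero, Ne, ← exists_mulVec_eq_zero_iff]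
  rintro ⟨x, hx, hker⟩
  set z := L *ᵥ x
  have hDinv : D⁻¹ *ᵥ x = β • z := by
    rwa [sub_mulVec, sub_eq_zero, smul_mulVec] at hker
  have hx_eq : x = β • D *ᵥ z := by
    rw [← mulVec_smul, ← hDinv, mulVec_mulVec, mul_nonsing_inv D hD, one_mulVec]
  have hform : β * (x ⬝ᵥ z) = β ^ 2 * (z ⬝ᵥ D *ᵥ z) := by
    calc β * (x ⬝ᵥ z) = x ⬝ᵥ D⁻¹ *ᵥ x := by rw [hDinv, dotProduct_smul, smul_eq_mul]
      _ = β ^ 2 * (z ⬝ᵥ D *ᵥ z) := by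
        rw [hDinv]
        nth_rw 1 [hx_eq]
        rw [smul_dotProduct, dotProduct_smul, dotProduct_comm, smul_eq_mul, smul_eq_mul]
        ring
  have hβz : β * (x ⬝ᵥ z) = 0 :=
    le_antisymm (hform ▸ mul_nonpos_of_nonneg_of_nonpos (sq_nonneg β) (hDL x))
      (mul_nonneg hβ (hL x))
  rcases mul_eq_zero.mp hβz with hβ₀ | hxz
  · exact hx (by rw [hx_eq, hβ₀, zero_smul])
  · exact hx (by rw [hx_eq, show z = 0 from hL₀ x hxz, mulVec_zero, smul_zero])

theorem ite_zero_mulVec {m n α : Type*} [Fintype n] [NonUnitalNonAssocSemiring α] (c : Prop)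
    [Decidable c] (A : Matrix m n α) (v : n → α) :
    (if c then A else 0) *ᵥ v = if c then A *ᵥ v else 0 := by
  split_ifs <;> simp

section Blocks

variable {ι ι' κ κ' : Type*} [Fintype ι'] [Fintype κ']

theorem curry_mulVec (A : Matrix (ι × κ) (ι' × κ') ℝ) (x : ι' × κ' → ℝ) (i : ι) :
    curry (A *ᵥ x) i = ∑ j, (of fun a b => A (i, a) (j, b)) *ᵥ curry x j := by
  ext a
  simp only [curry_apply, mulVec, dotProduct, Fintype.sum_prod_type, Finset.sum_apply,
    of_apply]

theorem dotProduct_eq_sum_curry (x y : ι' × κ' → ℝ) :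
    x ⬝ᵥ y = ∑ i, curry x i ⬝ᵥ curry y i := by
  simp only [dotProduct, Fintype.sum_prod_type, curry_apply]

end Blocks

section Cuts

variable {ι κ : Type*} [Fintype ι] [Fintype κ]

theorem sum_sum_xor_dotProduct_mulVec_nonpos {M : Matrix κ κ ℝ} (hM : M.PosSemidef)
    (R : ι → Prop) [DecidablePred R] {z : ι → κ → ℝ} (hz : ∑ i, z i = 0) :
    ∑ i, ∑ j, (if Xor (R i) (R j) then z i ⬝ᵥ M *ᵥ z j else 0) ≤ 0 := by
  set y := ∑ i with R i, z i
  have hy : ∑ i with ¬R i, z i = -y :=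
    eq_neg_of_add_eq_zero_right ((Finset.sum_filter_add_sum_filter_not _ R z).trans hz)
  have hrow (i : ι) : ∑ j, (if Xor (R i) (R j) then z i ⬝ᵥ M *ᵥ z j else 0) =
      z i ⬝ᵥ M *ᵥ (if R i then -y else y) := by
    by_cases hi : R i
    · have hxor (j : ι) : Xor (R i) (R j) ↔ ¬R j := by simp [hi]
      simp only [hxor, ← Finset.sum_filter, ← dotProduct_sum, ← mulVec_sum, hy, if_pos hi]
    · have hxor (j : ι) : Xor (R i) (R j) ↔ R j := by simp [hi]
      simp only [hxor, ← Finset.sum_filter, ← dotProduct_sum, ← mulVec_sum, y, if_neg hi]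
  have hyy : 0 ≤ y ⬝ᵥ M *ᵥ y := by simpa using hM.dotProduct_mulVec_nonneg y
  calc ∑ i, ∑ j, (if Xor (R i) (R j) then z i ⬝ᵥ M *ᵥ z j else 0)
      = ∑ i, z i ⬝ᵥ M *ᵥ (if R i then -y else y) := Finset.sum_congr rfl fun i _ => hrow i
    _ = (∑ i with R i, z i) ⬝ᵥ M *ᵥ (-y) + (∑ i with ¬R i, z i) ⬝ᵥ M *ᵥ y := by
      rw [← Finset.sum_filter_add_sum_filter_not _ R, sum_dotProduct, sum_dotProduct]
      congr 1
      · exact Finset.sum_congr rfl fun i hi => by rw [if_pos (Finset.mem_filter.mp hi).2]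
      · exact Finset.sum_congr rfl fun i hi => by rw [if_neg (Finset.mem_filter.mp hi).2]
    _ = -2 * (y ⬝ᵥ M *ᵥ y) := by
      rw [hy, mulVec_neg, dotProduct_neg, neg_dotProduct]
      ring
    _ ≤ 0 := by linarith

theorem dotProduct_mulVec_nonpos_of_eq_sum_cuts {ε : Type*} {A : Matrix (ι × κ) (ι × κ) ℝ}
    (E : Finset ε) (M : ε → Matrix κ κ ℝ) (C : ε → ι → ι → Prop) [∀ e, DecidableRel (C e)]
    (hA : ∀ i j, (of fun a b => A (i, a) (j, b)) = ∑ e ∈ E, if C e i j then M e else 0)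
    (hC : ∀ e ∈ E, (M e).PosSemidef ∧ ∃ R : ι → Prop, ∀ i j, C e i j ↔ Xor (R i) (R j))
    {z : ι × κ → ℝ} (hz : ∑ i, curry z i = 0) : z ⬝ᵥ A *ᵥ z ≤ 0 := by
  classical
  have hform : z ⬝ᵥ A *ᵥ z = ∑ e ∈ E, ∑ i, ∑ j,
      if C e i j then curry z i ⬝ᵥ M e *ᵥ curry z j else 0 := by
    simp only [dotProduct_eq_sum_curry z, curry_mulVec, hA, sum_mulVec, dotProduct_sum,
      ite_zero_mulVec, apply_ite (dotProduct _), dotProduct_zero]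
    exact (Finset.sum_congr rfl fun i _ => Finset.sum_comm).trans Finset.sum_comm
  rw [hform]
  refine Finset.sum_nonpos fun e he => ?_
  obtain ⟨hM, R, hR⟩ := hC e he
  simp only [hR]
  exact sum_sum_xor_dotProduct_mulVec_nonpos hM R hz

end Cuts

end Matrix

namespace SimpleGraph

variable {V : Type*} {G : SimpleGraph V}

theorem IsAcyclic.mem_edges_iff_not_reachable_deleteEdges (hG : G.IsAcyclic) {i j u v : V}
    {p : G.Walk i j} (hp : p.IsPath) :
    s(u, v) ∈ p.edges ↔ ¬(G.deleteEdges {s(u, v)}).Reachable i j := by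
  classical
  rw [reachable_deleteEdges_iff_exists_walk, not_exists_not]
  refine ⟨fun he q => ?_, fun h => h p⟩
  have hpq : p = q.bypass :=
    congrArg Subtype.val ((hG.subsingleton_path i j).elim ⟨p, hp⟩ ⟨q.bypass, q.bypass_isPath⟩)
  exact q.edges_bypass_subset_edges (hpq ▸ he)

theorem Preconnected.reachable_deleteEdges_or (hG : G.Preconnected) (u v w : V) :
    (G.deleteEdges {s(u, v)}).Reachable w u ∨ (G.deleteEdges {s(u, v)}).Reachable w v := by
  suffices ∀ {x y} (p : G.Walk x y), y = u →
      (G.deleteEdges {s(u, v)}).Reachable x u ∨ (G.deleteEdges {s(u, v)}).Reachable x v from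
    this (hG w u).some rfl
  intro x y p hy
  induction p with
  | nil => exact .inl (hy ▸ .rfl)
  | @cons a b _ hab _ ih =>
    by_cases he : s(a, b) = s(u, v)
    · rcases Sym2.eq_iff.mp he with ⟨rfl, -⟩ | ⟨rfl, -⟩
      · exact .inl .rfl
      · exact .inr .rfl
    · have hab' : (G.deleteEdges {s(u, v)}).Adj a b := by simpa [hab] using he
      exact (ih hy).imp hab'.reachable.trans hab'.reachable.trans

theorem Preconnected.reachable_deleteEdges_iff (hG : G.Preconnected) {u v : V}
    (huv : G.IsBridge s(u, v)) (i j : V) :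
    (G.deleteEdges {s(u, v)}).Reachable i j ↔
      ((G.deleteEdges {s(u, v)}).Reachable i u ↔ (G.deleteEdges {s(u, v)}).Reachable j u) := by
  refine ⟨fun hij => ⟨hij.symm.trans, hij.trans⟩, fun hiff => ?_⟩
  rcases hG.reachable_deleteEdges_or u v i with hi | hi
  · exact hi.trans (hiff.mp hi).symm
  rcases hG.reachable_deleteEdges_or u v j with hj | hj
  · exact absurd ((hiff.mpr hj).symm.trans hi) (isBridge_iff.mp huv)
  · exact hi.trans hj.symm

theorem IsTree.mem_edges_iff_xor (hG : G.IsTree) {i j u v : V} (huv : G.Adj u v)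
    {p : G.Walk i j} (hp : p.IsPath) :
    s(u, v) ∈ p.edges ↔
      Xor ((G.deleteEdges {s(u, v)}).Reachable i u) ((G.deleteEdges {s(u, v)}).Reachable j u) := by
  rw [hG.isAcyclic.mem_edges_iff_not_reachable_deleteEdges hp, xor_iff_not_iff,
    hG.connected.preconnected.reachable_deleteEdges_iff
      (isAcyclic_iff_forall_adj_isBridge.mp hG.isAcyclic huv)]

theorem Walk.IsTrail.sum_map_darts_eq_sum_edgeFinset {M : Type*} [AddCommMonoid M]
    [Fintype G.edgeSet] [DecidableEq V] (f : V → V → M) (hf : ∀ a b, f a b = f b a) {i j : V}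
    {p : G.Walk i j} (hp : p.IsTrail) :
    (p.darts.map fun d => f d.toProd.1 d.toProd.2).sum =
      ∑ e ∈ G.edgeFinset, if e ∈ p.edges then Sym2.lift ⟨f, hf⟩ e else 0 := by
  have hmap : (p.darts.map fun d => f d.toProd.1 d.toProd.2) = p.edges.map (Sym2.lift ⟨f, hf⟩) := by
    rw [Walk.edges, List.map_map]
    rfl
  have hsub : p.edges.toFinset ⊆ G.edgeFinset := fun e he =>
    mem_edgeFinset.mpr (p.edges_subset_edgeSet (List.mem_toFinset.mp he))
  simp_rw [hmap, ← List.sum_toFinset _ hp.edges_nodup, ← List.mem_toFinset (l := p.edges),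
    Finset.sum_ite_mem, Finset.inter_eq_right.mpr hsub]

theorem IsTree.distance_dotProduct_mulVec_nonpos {κ : Type*} [Fintype V] [Fintype κ]
    (hG : G.IsTree) {Wt : V → V → Matrix κ κ ℝ} (hWtsym : ∀ i j, Wt i j = Wt j i)
    (hWtpd : ∀ i j, G.Adj i j → (Wt i j).PosDef) {D : Matrix (V × κ) (V × κ) ℝ}
    (hD : ∀ (i j : V) (p : G.Walk i j), p.IsPath →
      ∀ a b : κ, D (i, a) (j, b) = ((p.darts.map fun d => Wt d.toProd.1 d.toProd.2).sum) a b)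
    {z : V × κ → ℝ} (hz : ∑ i, curry z i = 0) : z ⬝ᵥ D *ᵥ z ≤ 0 := by
  classical
  choose P hP using fun i j => (hG.existsUnique_path i j).exists
  refine Matrix.dotProduct_mulVec_nonpos_of_eq_sum_cuts G.edgeFinset (Sym2.lift ⟨Wt, hWtsym⟩)
    (fun e i j => e ∈ (P i j).edges) (fun i j => ?_) (fun e he => ?_) hz
  · ext a b
    rw [Matrix.of_apply, hD i j (P i j) (hP i j),
      (hP i j).isTrail.sum_map_darts_eq_sum_edgeFinset Wt hWtsym]
  · induction e using Sym2.ind with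
    | _ u v =>
      have huv : G.Adj u v := mem_edgeFinset.mp he
      exact ⟨(hWtpd u v huv).posSemidef, _, fun i j => hG.mem_edges_iff_xor huv (hP i j)⟩

end SimpleGraph

section Laplacian

variable {n s : ℕ} (G : SimpleGraph (Fin n)) [DecidableRel G.Adj]
  (W : Fin n → Fin n → Matrix (Fin s) (Fin s) ℝ)

theorem lap_block (i j : Fin n) :
    (of fun a b => lap n s G W (i, a) (j, b)) =
      (if i = j then ∑ k with G.Adj i k, (W i k)⁻¹ else 0) -
        if G.Adj i j then (W i j)⁻¹ else 0 := by
  ext a b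
  by_cases hij : i = j
  · subst hij
    simp [lap]
  · simp only [lap, of_apply, hij, if_false, Matrix.sub_apply, Matrix.zero_apply, zero_sub]
    split_ifs <;> simp

theorem curry_lap_mulVec (x : Fin n × Fin s → ℝ) (i : Fin n) :
    curry (lap n s G W *ᵥ x) i = ∑ j with G.Adj i j, (W i j)⁻¹ *ᵥ (curry x i - curry x j) := by
  simp [curry_mulVec, lap_block, sub_mulVec, ite_zero_mulVec, mulVec_sub, sum_mulVec,
    Finset.sum_filter]

variable {G W}

theorem sum_curry_lap_mulVec (hW : ∀ i j, W i j = W j i) (x : Fin n × Fin s → ℝ) :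
    ∑ i, curry (lap n s G W *ᵥ x) i = 0 := by
  simp only [curry_lap_mulVec, Finset.sum_filter]
  refine self_eq_neg.mp ?_
  conv_lhs => rw [Finset.sum_comm]
  rw [← Finset.sum_neg_distrib]
  refine Finset.sum_congr rfl fun i _ => ?_
  rw [← Finset.sum_neg_distrib]
  refine Finset.sum_congr rfl fun j _ => ?_
  simp only [G.adj_comm j i, hW j i]
  rw [← neg_sub (curry x i) (curry x j), mulVec_neg]
  split_ifs <;> simp

theorem two_mul_dotProduct_lap_mulVec (hW : ∀ i j, W i j = W j i) (x : Fin n × Fin s → ℝ) :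
    2 * (x ⬝ᵥ lap n s G W *ᵥ x) = ∑ i, ∑ j with G.Adj i j,
      (curry x i - curry x j) ⬝ᵥ (W i j)⁻¹ *ᵥ (curry x i - curry x j) := by
  have hQ : x ⬝ᵥ lap n s G W *ᵥ x = ∑ i, ∑ j,
      if G.Adj i j then curry x i ⬝ᵥ (W i j)⁻¹ *ᵥ (curry x i - curry x j) else 0 := by
    simp only [dotProduct_eq_sum_curry x, curry_lap_mulVec, dotProduct_sum, Finset.sum_filter,
      apply_ite (dotProduct _), dotProduct_zero]
  have hQ' : x ⬝ᵥ lap n s G W *ᵥ x = ∑ i, ∑ j,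
      if G.Adj i j then -(curry x j ⬝ᵥ (W i j)⁻¹ *ᵥ (curry x i - curry x j)) else 0 := by
    rw [hQ, Finset.sum_comm]
    refine Finset.sum_congr rfl fun i _ => Finset.sum_congr rfl fun j _ => ?_
    simp only [G.adj_comm j i, hW j i, ← neg_sub (curry x i), mulVec_neg, dotProduct_neg]
  rw [two_mul]
  nth_rw 1 [hQ]
  rw [hQ', ← Finset.sum_add_distrib]
  simp only [← Finset.sum_add_distrib, Finset.sum_filter]
  refine Finset.sum_congr rfl fun i _ => Finset.sum_congr rfl fun j _ => ?_
  split_ifs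
  · rw [sub_dotProduct, ← sub_eq_add_neg]
  · rw [add_zero]

variable (hW : ∀ i j, W i j = W j i) (hWpd : ∀ i j, G.Adj i j → (W i j).PosDef)
include hW hWpd

theorem dotProduct_lap_mulVec_nonneg (x : Fin n × Fin s → ℝ) :
    0 ≤ x ⬝ᵥ lap n s G W *ᵥ x := by
  have h := two_mul_dotProduct_lap_mulVec (G := G) hW x
  have : 0 ≤ 2 * (x ⬝ᵥ lap n s G W *ᵥ x) := by
    rw [h]
    refine Finset.sum_nonneg fun i _ => Finset.sum_nonneg fun j hj => ?_
    simpa using (hWpd i j (Finset.mem_filter.mp hj).2).inv.posSemidef.dotProduct_mulVec_nonneg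
      (curry x i - curry x j)
  linarith

theorem curry_eq_of_dotProduct_lap_mulVec_eq_zero {x : Fin n × Fin s → ℝ}
    (hx : x ⬝ᵥ lap n s G W *ᵥ x = 0) {i j : Fin n} (hij : G.Adj i j) :
    curry x i = curry x j := by
  by_contra hne
  have hpos : 0 < (curry x i - curry x j) ⬝ᵥ (W i j)⁻¹ *ᵥ (curry x i - curry x j) := by
    simpa using (hWpd i j hij).inv.dotProduct_mulVec_pos (sub_ne_zero.mpr hne)
  have hterm (k l : Fin n) (hkl : l ∈ ({l | G.Adj k l} : Finset _)) :
      0 ≤ (curry x k - curry x l) ⬝ᵥ (W k l)⁻¹ *ᵥ (curry x k - curry x l) := by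
    simpa using (hWpd k l (Finset.mem_filter.mp hkl).2).inv.posSemidef.dotProduct_mulVec_nonneg
      (curry x k - curry x l)
  have : 0 < 2 * (x ⬝ᵥ lap n s G W *ᵥ x) := by
    rw [two_mul_dotProduct_lap_mulVec hW]
    refine Finset.sum_pos' (fun k _ => Finset.sum_nonneg (hterm k)) ⟨i, Finset.mem_univ i, ?_⟩
    exact Finset.sum_pos' (hterm i) ⟨j, by simpa using hij, hpos⟩
  simp [hx] at this

theorem lap_mulVec_eq_zero_of_dotProduct_eq_zero {x : Fin n × Fin s → ℝ}
    (hx : x ⬝ᵥ lap n s G W *ᵥ x = 0) : lap n s G W *ᵥ x = 0 := by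
  ext ⟨i, a⟩
  have hi : curry (lap n s G W *ᵥ x) i = 0 := by
    rw [curry_lap_mulVec]
    refine Finset.sum_eq_zero fun j hj => ?_
    rw [curry_eq_of_dotProduct_lap_mulVec_eq_zero hW hWpd hx (Finset.mem_filter.mp hj).2,
      sub_self, mulVec_zero]
  exact congrFun hi a

end Laplacian

theorem stmt0_general (n s : ℕ)
    (T : SimpleGraph (Fin n)) (hT : T.IsTree)
    (Wt : Fin n → Fin n → Matrix (Fin s) (Fin s) ℝ)
    (hWtsym : ∀ i j, Wt i j = Wt j i)
    (hWtpd : ∀ i j, T.Adj i j → (Wt i j).PosDef)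
    (D : Matrix (Fin n × Fin s) (Fin n × Fin s) ℝ)
    (hD : ∀ (i j : Fin n) (p : T.Walk i j), p.IsPath →
      ∀ a b : Fin s, D (i, a) (j, b) =
        ((p.darts.map fun d => Wt d.toProd.1 d.toProd.2).sum) a b)
    (hDdet : IsUnit D.det)
    (G : SimpleGraph (Fin n)) [DecidableRel G.Adj]
    (W : Fin n → Fin n → Matrix (Fin s) (Fin s) ℝ)
    (hWsym : ∀ i j, W i j = W j i)
    (hWpd : ∀ i j, G.Adj i j → (W i j).PosDef)
    (β : ℝ) (hβ : 0 ≤ β) :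
    IsUnit (D⁻¹ - β • lap n s G W).det :=
  Matrix.isUnit_det_inv_sub_smul hDdet (dotProduct_lap_mulVec_nonneg hWsym hWpd)
    (fun _ => lap_mulVec_eq_zero_of_dotProduct_eq_zero hWsym hWpd)
    (fun x => hT.distance_dotProduct_mulVec_nonpos hWtsym hWtpd hD (sum_curry_lap_mulVec hWsym x))
    hβ

/-- For every real β ≥ 0, the matrix D⁻¹ − βL is non-singular. -/
theorem stmt0 (n s : ℕ) (hn : 0 < n) (hs : 0 < s)
    (T : SimpleGraph (Fin n)) (hT : T.IsTree)
    (Wt : Fin n → Fin n → Matrix (Fin s) (Fin s) ℝ)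
    (hWtsym : ∀ i j, Wt i j = Wt j i)
    (hWtpd : ∀ i j, T.Adj i j → (Wt i j).PosDef)
    (D : Matrix (Fin n × Fin s) (Fin n × Fin s) ℝ)
    (hD : ∀ (i j : Fin n) (p : T.Walk i j), p.IsPath →
      ∀ a b : Fin s, D (i, a) (j, b) =
        ((p.darts.map fun d => Wt d.toProd.1 d.toProd.2).sum) a b)
    (hDdet : IsUnit D.det)
    (G : SimpleGraph (Fin n)) [DecidableRel G.Adj] (hG : G.Connected)
    (W : Fin n → Fin n → Matrix (Fin s) (Fin s) ℝ)
    (hWsym : ∀ i j, W i j = W j i)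
    (hWpd : ∀ i j, G.Adj i j → (W i j).PosDef)
    (β : ℝ) (hβ : 0 ≤ β) :
    IsUnit (D⁻¹ - β • lap n s G W).det :=
  stmt0_general n s T hT Wt hWtsym hWtpd D hD hDdet G W hWsym hWpd β hβ
end
end

section
/- For every index i ∈ {1,…,n}, with Δ = {1,…,n}∖{i}, the principal submatrix D⁻¹[[Δ]] of D⁻¹ obtained by deleting the i-th block row and i-th block column is negative semidefinite, and its null space has dimension exactly s. -/
open Matrix BigOperators

noncomputable section

/-!
Root the tree at `i` and let `F x` be the edge set of the path from `i` to `x`. The path from `j`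
to `k` has edge set `F j ∆ F k`. Hence, if every block row of `A` is the `i`-th block row of `D`,
the matrix `G = A + Aᵀ - D` has blocks `G_jk = 2 ∑_{e ∈ F j ∩ F k} W_e`, i.e.
`G = 2 ∑_e χ_e χ_eᵀ ⊗ W_e` is positive semidefinite. For `x` supported off block `i` put
`z = D⁻¹ x`; then `(D z)_i = 0` forces `A z = 0`, so `xᵀ D⁻¹ x = zᵀ D z = -zᵀ G z ≤ 0`.

The nullity needs no tree: as `D_ii = 0`, the map `v ↦ (D (e_i ⊗ v))|_Δ` is an isomorphism from
`ℝ^s` onto the kernel of `D⁻¹[[Δ]]`.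
-/

open Function SimpleGraph
open scoped Kronecker

section ExtendByZero

variable {R k l m : Type*} [CommSemiring R] [Fintype k] [Fintype m] {e : k → m}

theorem Function.Injective.extend_zero_dotProduct (he : Injective e) (x : k → R) (y : m → R) :
    extend e x 0 ⬝ᵥ y = x ⬝ᵥ (y ∘ e) :=
  (Fintype.sum_of_injective e he _ _
    (fun p hp => by simp [extend_apply' _ _ _ (fun ⟨q, hq⟩ => hp ⟨q, hq⟩)])
    (fun q => by simp [he.extend_apply])).symm

theorem Matrix.submatrix_mulVec_of_injective (he : Injective e) (M : Matrix l m R) (f : k → l)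
    (x : k → R) : M.submatrix f e *ᵥ x = (M *ᵥ extend e x 0) ∘ f := by
  ext q
  simp only [Function.comp_apply, mulVec, dotProduct_comm (M (f q)), he.extend_zero_dotProduct]
  exact dotProduct_comm _ _

theorem Matrix.dotProduct_submatrix_mulVec (he : Injective e) (M : Matrix m m R) (x : k → R) :
    x ⬝ᵥ M.submatrix e e *ᵥ x = extend e x 0 ⬝ᵥ M *ᵥ extend e x 0 := by
  rw [submatrix_mulVec_of_injective he, he.extend_zero_dotProduct]

end ExtendByZero

section ComplementaryRanges

variable {R k t m : Type*} [Zero R] {e : k → m} {c : t → m}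

theorem Function.extend_zero_comp_of_disjoint (hec : Disjoint (Set.range e) (Set.range c))
    (v : t → R) : extend c v 0 ∘ e = 0 :=
  funext fun q => extend_apply' _ _ _ fun ⟨r, hr⟩ =>
    Set.disjoint_left.mp hec ⟨q, rfl⟩ ⟨r, hr⟩

theorem Function.extend_comp_self_of_isCompl (he : Injective e)
    (hec : IsCompl (Set.range e) (Set.range c)) {y : m → R} (hy : y ∘ c = 0) :
    extend e (y ∘ e) 0 = y := by
  ext p
  by_cases hp : ∃ q, e q = p
  · obtain ⟨q, rfl⟩ := hp
    exact he.extend_apply _ _ _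
  · obtain ⟨r, rfl⟩ : p ∈ Set.range c := (hec.codisjoint.top_le (Set.mem_univ p)).resolve_left hp
    rw [extend_apply' _ _ _ hp]
    exact (congrFun hy r).symm

end ComplementaryRanges

theorem isCompl_range_prodMap_val_range_prodMk {ι σ : Type*} (i : ι) :
    IsCompl (Set.range (Prod.map (Subtype.val : {j // j ≠ i} → ι) (id : σ → σ)))
      (Set.range (Prod.mk i)) := by
  have h : Set.range (Prod.mk i : σ → ι × σ) =
      (Set.range (Prod.map (Subtype.val : {j // j ≠ i} → ι) id))ᶜ := by
    ext ⟨j, a⟩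
    simp [Set.range_prodMap, eq_comm]
  rw [h]
  exact isCompl_compl

section InverseSubmatrix

variable {K k t m : Type*} [Field K] [Fintype m] {D : Matrix m m K} {e : k → m} {c : t → m}

variable (D e c) in
def Matrix.extendMulVecRestrict : (t → K) →ₗ[K] (k → K) :=
  LinearMap.funLeft K K e ∘ₗ D.mulVecLin ∘ₗ ExtendByZero.linearMap K c

theorem Matrix.extendMulVecRestrict_apply (v : t → K) :
    D.extendMulVecRestrict e c v = (D *ᵥ extend c v 0) ∘ e := rfl

theorem Matrix.dotProduct_inv_submatrix_mulVec_nonpos [PartialOrder K] [Fintype k]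
    [DecidableEq m] (hD : IsUnit D.det) (he : Injective e)
    (hec : Disjoint (Set.range e) (Set.range c))
    (hneg : ∀ z, (D *ᵥ z) ∘ c = 0 → z ⬝ᵥ D *ᵥ z ≤ 0) (x : k → K) :
    x ⬝ᵥ D⁻¹.submatrix e e *ᵥ x ≤ 0 := by
  have hy : extend e x 0 = D *ᵥ (D⁻¹ *ᵥ extend e x 0) := by
    rw [mulVec_mulVec, mul_nonsing_inv _ hD, one_mulVec]
  rw [dotProduct_submatrix_mulVec he, hy, dotProduct_comm, mulVec_mulVec, nonsing_inv_mul _ hD,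
    one_mulVec]
  exact hneg _ (by rw [← hy]; exact extend_zero_comp_of_disjoint hec.symm x)

variable [Fintype t] (he : Injective e) (hc : Injective c)
  (hec : IsCompl (Set.range e) (Set.range c)) (hDc : D.submatrix c c = 0)
include he hc hec hDc

theorem Matrix.extend_extendMulVecRestrict (v : t → K) :
    extend e (D.extendMulVecRestrict e c v) 0 = D *ᵥ extend c v 0 := by
  rw [extendMulVecRestrict_apply]
  refine extend_comp_self_of_isCompl he hec ?_
  rw [← submatrix_mulVec_of_injective hc, hDc, zero_mulVec]

variable [DecidableEq m] (hD : IsUnit D.det)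
include hD

theorem Matrix.injective_extendMulVecRestrict : Injective (D.extendMulVecRestrict e c) := by
  refine (injective_iff_map_eq_zero _).mpr fun v hv => ?_
  have hDv : D *ᵥ extend c v 0 = 0 := by
    rw [← extend_extendMulVecRestrict he hc hec hDc, hv]
    exact extend_zero e
  have hv0 : extend c v 0 = 0 := by
    rw [← one_mulVec (extend c v 0), ← nonsing_inv_mul D hD, ← mulVec_mulVec, hDv, mulVec_zero]
  simpa [extend_comp hc] using congrArg (· ∘ c) hv0

theorem Matrix.ker_inv_submatrix_eq_range [Fintype k] :
    LinearMap.ker (D⁻¹.submatrix e e).mulVecLin = LinearMap.range (D.extendMulVecRestrict e c) := by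
  ext x
  simp only [LinearMap.mem_ker, mulVecLin_apply, LinearMap.mem_range,
    submatrix_mulVec_of_injective he]
  constructor
  · intro hx
    refine ⟨(D⁻¹ *ᵥ extend e x 0) ∘ c, ?_⟩
    rw [extendMulVecRestrict_apply, extend_comp_self_of_isCompl hc hec.symm hx, mulVec_mulVec,
      mul_nonsing_inv _ hD, one_mulVec, extend_comp he]
  · rintro ⟨v, rfl⟩
    rw [extend_extendMulVecRestrict he hc hec hDc, mulVec_mulVec, nonsing_inv_mul _ hD,
      one_mulVec, extend_zero_comp_of_disjoint hec.disjoint]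

theorem Matrix.finrank_ker_inv_submatrix [Fintype k] :
    Module.finrank K (LinearMap.ker (D⁻¹.submatrix e e).mulVecLin) = Fintype.card t := by
  rw [ker_inv_submatrix_eq_range he hc hec hDc hD,
    LinearMap.finrank_range_of_inj (injective_extendMulVecRestrict he hc hec hDc hD),
    Module.finrank_fintype_fun_eq_card]

end InverseSubmatrix

theorem Finset.sum_add_sum_eq_sum_symmDiff_add {ι M : Type*} [AddCommMonoid M] [DecidableEq ι]
    (s t : Finset ι) (f : ι → M) :
    ∑ x ∈ s, f x + ∑ x ∈ t, f x = ∑ x ∈ symmDiff s t, f x + 2 • ∑ x ∈ s ∩ t, f x := by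
  rw [← Finset.sum_union_inter, ← Finset.sum_sdiff (Finset.inter_subset_union (s := s) (t := t)),
    symmDiff_eq_sup_sdiff_inf, two_nsmul, add_assoc]
  rfl

section Gromov

variable {R ι σ : Type*} [CommRing R] [Fintype ι] [Fintype σ]

/-- Blockwise `G_jk = D_ik + D_ijᵀ - D_jk`: twice the Gromov product of `j` and `k` seen from
`i`. -/
def Matrix.gromovMatrix (D : Matrix (ι × σ) (ι × σ) R) (i : ι) : Matrix (ι × σ) (ι × σ) R :=
  of fun p q => D (i, p.2) q + D (i, q.2) p - D p q

theorem Matrix.dotProduct_mulVec_eq_neg_gromovMatrix {D : Matrix (ι × σ) (ι × σ) R} {i : ι}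
    {z : ι × σ → R} (hz : (D *ᵥ z) ∘ Prod.mk i = 0) :
    z ⬝ᵥ D *ᵥ z = -(z ⬝ᵥ D.gromovMatrix i *ᵥ z) := by
  set A : Matrix (ι × σ) (ι × σ) R := of fun p q => D (i, p.2) q
  have hA : A *ᵥ z = 0 := funext fun p => congrFun hz p.2
  have hG : D.gromovMatrix i = A + Aᵀ - D := rfl
  have hAt : z ⬝ᵥ Aᵀ *ᵥ z = 0 := by rw [dotProduct_mulVec, vecMul_transpose, hA, zero_dotProduct]
  rw [hG, sub_mulVec, add_mulVec, dotProduct_sub, dotProduct_add, hA, hAt, dotProduct_zero]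
  ring

end Gromov

namespace SimpleGraph.IsTree

variable {V : Type*} {T : SimpleGraph V} (hT : T.IsTree)

def rootPath (i x : V) : T.Walk i x := (hT.existsUnique_path i x).exists.choose

theorem isPath_rootPath (i x : V) : (hT.rootPath i x).IsPath :=
  (hT.existsUnique_path i x).exists.choose_spec

theorem eq_rootPath {i x : V} {p : T.Walk i x} (hp : p.IsPath) : p = hT.rootPath i x :=
  (hT.existsUnique_path i x).unique hp (hT.isPath_rootPath i x)

variable [DecidableEq V]

def rootEdges (i x : V) : Finset (Sym2 V) := (hT.rootPath i x).edges.toFinset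

def rootEdgeIndicator (i : V) (e : Sym2 V) (x : V) : ℝ := if e ∈ hT.rootEdges i x then 1 else 0

theorem rootEdges_self (i : V) : hT.rootEdges i i = ∅ := by
  rw [rootEdges, ← hT.eq_rootPath Walk.IsPath.nil, Walk.edges_nil, List.toFinset_nil]

theorem mem_edgeSet_of_mem_rootEdges {i x : V} {e : Sym2 V} (he : e ∈ hT.rootEdges i x) :
    e ∈ T.edgeSet :=
  (hT.rootPath i x).edges_subset_edgeSet (List.mem_toFinset.mp he)

theorem symmDiff_rootEdges_of_mem_support {i v w : V} (h : T.Adj v w)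
    (hv : v ∈ (hT.rootPath i w).support) :
    symmDiff (hT.rootEdges i v) (hT.rootEdges i w) = {s(v, w)} := by
  have hw : w ∉ (hT.rootPath i v).support :=
    hT.isAcyclic.ne_mem_support_of_support_of_adj_of_isPath (hT.isPath_rootPath i w)
      (hT.isPath_rootPath i v) h.symm hv
  have hvw : s(v, w) ∉ hT.rootEdges i v := fun he =>
    hw ((hT.rootPath i v).snd_mem_support_of_mem_edges (List.mem_toFinset.mp he))
  have hconcat := hT.isAcyclic.path_concat (hT.isPath_rootPath i v) (hT.isPath_rootPath i w) h hv
  have hF : hT.rootEdges i w = {s(v, w)} ∪ hT.rootEdges i v := by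
    simp [rootEdges, hconcat, Walk.edges_concat, Finset.union_comm]
  rw [hF, ← Finset.sup_eq_union, ← (Finset.disjoint_singleton_left.mpr hvw).symmDiff_eq_sup,
    symmDiff_comm {s(v, w)}, symmDiff_symmDiff_cancel_left]

theorem symmDiff_rootEdges_of_adj {i v w : V} (h : T.Adj v w) :
    symmDiff (hT.rootEdges i v) (hT.rootEdges i w) = {s(v, w)} := by
  by_cases hv : v ∈ (hT.rootPath i w).support
  · exact hT.symmDiff_rootEdges_of_mem_support h hv
  · have hw : w ∈ (hT.rootPath i v).support :=
      hT.isAcyclic.mem_support_of_ne_mem_support_of_adj_of_isPath (hT.isPath_rootPath i v)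
        (hT.isPath_rootPath i w) h hv
    rw [symmDiff_comm, hT.symmDiff_rootEdges_of_mem_support h.symm hw, Sym2.eq_swap]

theorem edges_toFinset_eq_symmDiff_rootEdges (i : V) {j k : V} {p : T.Walk j k}
    (hp : p.IsPath) : p.edges.toFinset = symmDiff (hT.rootEdges i j) (hT.rootEdges i k) := by
  induction p with
  | nil => simp
  | @cons j j' k h p ih =>
    rw [Walk.cons_isPath_iff] at hp
    have hnew : s(j, j') ∉ p.edges.toFinset := fun he =>
      hp.2 (p.fst_mem_support_of_mem_edges (List.mem_toFinset.mp he))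
    rw [Walk.edges_cons, List.toFinset_cons, Finset.insert_eq, ← Finset.sup_eq_union,
      ← (Finset.disjoint_singleton_left.mpr hnew).symmDiff_eq_sup, ih hp.1,
      ← hT.symmDiff_rootEdges_of_adj h, symmDiff_assoc, symmDiff_symmDiff_cancel_left]

end SimpleGraph.IsTree

def SimpleGraph.IsDistanceMatrix {V σ R : Type*} [AddCommMonoid R] (T : SimpleGraph V)
    (W : V → V → Matrix σ σ R) (D : Matrix (V × σ) (V × σ) R) : Prop :=
  ∀ (i j : V) (p : T.Walk i j), p.IsPath → ∀ a b : σ,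
    D (i, a) (j, b) = ((p.darts.map fun d => W d.toProd.1 d.toProd.2).sum) a b

namespace SimpleGraph

variable {V σ : Type*} {T : SimpleGraph V} {W : V → V → Matrix σ σ ℝ}

theorem posDef_sym2Lift_of_mem_edgeSet (hW : ∀ u v, W u v = W v u)
    (hWpd : ∀ u v, T.Adj u v → (W u v).PosDef) {e : Sym2 V} (he : e ∈ T.edgeSet) :
    (Sym2.lift ⟨W, hW⟩ e).PosDef := by
  induction e using Sym2.ind with
  | _ u v => exact hWpd u v he

theorem sym2Lift_apply_comm (hW : ∀ u v, W u v = W v u)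
    (hWpd : ∀ u v, T.Adj u v → (W u v).PosDef) {e : Sym2 V} (he : e ∈ T.edgeSet) (a b : σ) :
    Sym2.lift ⟨W, hW⟩ e a b = Sym2.lift ⟨W, hW⟩ e b a := by
  rw [← (posDef_sym2Lift_of_mem_edgeSet hW hWpd he).isHermitian.apply a b, star_trivial]

namespace IsDistanceMatrix

variable {D : Matrix (V × σ) (V × σ) ℝ} (hD : T.IsDistanceMatrix W D)
include hD

theorem apply_self (i : V) (a b : σ) : D (i, a) (i, b) = 0 := by
  simp [hD i i Walk.nil Walk.IsPath.nil a b]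

variable [DecidableEq V] (hT : T.IsTree) (hW : ∀ u v, W u v = W v u)
include hT

theorem apply_eq_sum_symmDiff_rootEdges (i j k : V) (a b : σ) :
    D (j, a) (k, b) =
      ∑ e ∈ symmDiff (hT.rootEdges i j) (hT.rootEdges i k), Sym2.lift ⟨W, hW⟩ e a b := by
  obtain ⟨p, hp⟩ := (hT.existsUnique_path j k).exists
  have hdarts : (p.darts.map fun d => W d.toProd.1 d.toProd.2) =
      p.edges.map (Sym2.lift ⟨W, hW⟩) := by
    rw [Walk.edges, List.map_map]
    rfl
  rw [hD j k p hp, hdarts, ← List.sum_toFinset _ hp.edges_nodup,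
    hT.edges_toFinset_eq_symmDiff_rootEdges i hp, Matrix.sum_apply]

variable (hWpd : ∀ u v, T.Adj u v → (W u v).PosDef)
include hW hWpd

theorem isHermitian : D.IsHermitian := by
  refine IsHermitian.ext ?_
  rintro ⟨j, a⟩ ⟨k, b⟩
  rw [star_trivial, hD.apply_eq_sum_symmDiff_rootEdges hT hW j, symmDiff_comm,
    hD.apply_eq_sum_symmDiff_rootEdges hT hW j]
  refine Finset.sum_congr rfl fun e he => sym2Lift_apply_comm hW hWpd ?_ b a
  rcases Finset.mem_symmDiff.mp he with ⟨he, -⟩ | ⟨he, -⟩ <;>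
    exact hT.mem_edgeSet_of_mem_rootEdges he

variable [Fintype V]

theorem gromovMatrix_eq (i : V) :
    D.gromovMatrix i = (2 : ℝ) • ∑ e, vecMulVec (hT.rootEdgeIndicator i e)
      (hT.rootEdgeIndicator i e) ⊗ₖ Sym2.lift ⟨W, hW⟩ e := by
  ext ⟨j, a⟩ ⟨k, b⟩
  have hL : D.gromovMatrix i (j, a) (k, b) =
      D (i, a) (k, b) + D (i, b) (j, a) - D (j, a) (k, b) := rfl
  have hsymm : ∑ e ∈ hT.rootEdges i j, Sym2.lift ⟨W, hW⟩ e b a =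
      ∑ e ∈ hT.rootEdges i j, Sym2.lift ⟨W, hW⟩ e a b :=
    Finset.sum_congr rfl fun e he =>
      sym2Lift_apply_comm hW hWpd (hT.mem_edgeSet_of_mem_rootEdges he) b a
  have hinter : ∑ e, hT.rootEdgeIndicator i e j * hT.rootEdgeIndicator i e k *
      Sym2.lift ⟨W, hW⟩ e a b =
        ∑ e ∈ hT.rootEdges i j ∩ hT.rootEdges i k, Sym2.lift ⟨W, hW⟩ e a b := by
    rw [← Finset.univ_inter (_ ∩ _), ← Finset.sum_ite_mem]
    refine Finset.sum_congr rfl fun e _ => ?_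
    by_cases hj : e ∈ hT.rootEdges i j <;> by_cases hk : e ∈ hT.rootEdges i k <;>
      simp [IsTree.rootEdgeIndicator, hj, hk]
  have hsum := Finset.sum_add_sum_eq_sum_symmDiff_add (hT.rootEdges i j) (hT.rootEdges i k)
    fun e => Sym2.lift ⟨W, hW⟩ e a b
  rw [hL, hD.apply_eq_sum_symmDiff_rootEdges hT hW i, hD.apply_eq_sum_symmDiff_rootEdges hT hW i,
    hD.apply_eq_sum_symmDiff_rootEdges hT hW i, hT.rootEdges_self, ← Finset.bot_eq_empty,
    bot_symmDiff, bot_symmDiff, hsymm]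
  simp only [Matrix.smul_apply, Matrix.sum_apply, kroneckerMap_apply, vecMulVec_apply, hinter,
    two_smul]
  rw [two_nsmul] at hsum
  linarith

variable [Fintype σ]

theorem posSemidef_gromovMatrix (i : V) : (D.gromovMatrix i).PosSemidef := by
  rw [hD.gromovMatrix_eq hT hW hWpd i]
  refine (posSemidef_sum _ fun e _ => ?_).smul zero_le_two
  by_cases he : e ∈ T.edgeSet
  · simpa [star_trivial] using
      (posSemidef_vecMulVec_self_star (hT.rootEdgeIndicator i e)).kronecker
        (posDef_sym2Lift_of_mem_edgeSet hW hWpd he).posSemidef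
  · have : hT.rootEdgeIndicator i e = 0 :=
      funext fun x => if_neg fun h => he (hT.mem_edgeSet_of_mem_rootEdges h)
    simpa [this] using PosSemidef.zero

theorem dotProduct_mulVec_nonpos {i : V} {z : V × σ → ℝ} (hz : (D *ᵥ z) ∘ Prod.mk i = 0) :
    z ⬝ᵥ D *ᵥ z ≤ 0 := by
  rw [dotProduct_mulVec_eq_neg_gromovMatrix hz, neg_nonpos]
  simpa using (hD.posSemidef_gromovMatrix hT hW hWpd i).dotProduct_mulVec_nonneg z

end IsDistanceMatrix

end SimpleGraph

theorem stmt4_general (n s : ℕ)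
    (T : SimpleGraph (Fin n)) (hT : T.IsTree)
    (Wt : Fin n → Fin n → Matrix (Fin s) (Fin s) ℝ)
    (hWtsym : ∀ i j, Wt i j = Wt j i)
    (hWtpd : ∀ i j, T.Adj i j → (Wt i j).PosDef)
    (D : Matrix (Fin n × Fin s) (Fin n × Fin s) ℝ)
    (hD : ∀ (i j : Fin n) (p : T.Walk i j), p.IsPath →
      ∀ a b : Fin s, D (i, a) (j, b) =
        ((p.darts.map fun d => Wt d.toProd.1 d.toProd.2).sum) a b)
    (hDdet : IsUnit D.det)
    (i : Fin n) :
    negSemidef (D⁻¹.submatrix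
      (fun p : {j : Fin n // j ≠ i} × Fin s => ((p.1 : Fin n), p.2))
      (fun p : {j : Fin n // j ≠ i} × Fin s => ((p.1 : Fin n), p.2))) ∧
    Module.finrank ℝ
      (LinearMap.ker (Matrix.mulVecLin (D⁻¹.submatrix
        (fun p : {j : Fin n // j ≠ i} × Fin s => ((p.1 : Fin n), p.2))
        (fun p : {j : Fin n // j ≠ i} × Fin s => ((p.1 : Fin n), p.2))))) = s := by
  have hDist : T.IsDistanceMatrix Wt D := hD
  have he : Injective (Prod.map (Subtype.val : {j // j ≠ i} → Fin n) (id : Fin s → Fin s)) :=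
    Subtype.val_injective.prodMap injective_id
  have hec := isCompl_range_prodMap_val_range_prodMk (σ := Fin s) i
  have hDi : D.submatrix (Prod.mk i) (Prod.mk i) = 0 := by
    ext a b
    exact hDist.apply_self i a b
  refine ⟨⟨(hDist.isHermitian hT hWtsym hWtpd).inv.submatrix _, ?_⟩, ?_⟩
  · exact dotProduct_inv_submatrix_mulVec_nonpos hDdet he hec.disjoint
      fun z hz => hDist.dotProduct_mulVec_nonpos hT hWtsym hWtpd hz
  · have := finrank_ker_inv_submatrix he (Prod.mk_right_injective i) hec hDi hDdet
    rwa [Fintype.card_fin] at this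

/-- For every i, the principal submatrix D⁻¹[[Δ]], Δ = [n] ∖ {i}, is negative
semidefinite and its null space has dimension exactly s. -/
theorem stmt4 (n s : ℕ) (hn : 0 < n) (hs : 0 < s)
    (T : SimpleGraph (Fin n)) (hT : T.IsTree)
    (Wt : Fin n → Fin n → Matrix (Fin s) (Fin s) ℝ)
    (hWtsym : ∀ i j, Wt i j = Wt j i)
    (hWtpd : ∀ i j, T.Adj i j → (Wt i j).PosDef)
    (D : Matrix (Fin n × Fin s) (Fin n × Fin s) ℝ)
    (hD : ∀ (i j : Fin n) (p : T.Walk i j), p.IsPath →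
      ∀ a b : Fin s, D (i, a) (j, b) =
        ((p.darts.map fun d => Wt d.toProd.1 d.toProd.2).sum) a b)
    (hDdet : IsUnit D.det)
    (i : Fin n) :
    negSemidef (D⁻¹.submatrix
      (fun p : {j : Fin n // j ≠ i} × Fin s => ((p.1 : Fin n), p.2))
      (fun p : {j : Fin n // j ≠ i} × Fin s => ((p.1 : Fin n), p.2))) ∧
    Module.finrank ℝ
      (LinearMap.ker (Matrix.mulVecLin (D⁻¹.submatrix
        (fun p : {j : Fin n // j ≠ i} × Fin s => ((p.1 : Fin n), p.2))
        (fun p : {j : Fin n // j ≠ i} × Fin s => ((p.1 : Fin n), p.2))))) = s :=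
  stmt4_general n s T hT Wt hWtsym hWtpd D hD hDdet i
end
end

section
/- The inertia of D⁻¹ equals (ns−s, 0, s); that is, the inverse of the distance matrix of a weighted tree with positive definite matrix weights has exactly ns−s negative eigenvalues, no zero eigenvalue, and exactly s positive eigenvalues. -/
/-!
Root the tree at `r` and write `π k` for the parent of a vertex `k ≠ r`. For every vertex `x`,
`D(x, k) - D(x, π k)` is `-W(π k, k)` if `x` lies below `k` and `W(π k, k)` otherwise. Hence the
block columns `b_k = (e_k - e_{π k}) ⊗ I_s` satisfy `b_kᵀ D b_l = -2 δ_{kl} W(π k, k)`, so `D` is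
negative definite on their `(n - 1)s`-dimensional span, while `t = e_r ⊗ I_s + ½ ∑_k b_k`, which is
`(τ ⊗ I_s) / 2` for `τ_i = 2 - deg i`, has `tᵀ D t = ½ ∑_k W(π k, k)`, a positive definite matrix.
Since `(D y)ᵀ D⁻¹ (D y) = yᵀ D y`, the quadratic form of `D⁻¹` is negative definite on a subspace
of dimension `ns - s` and positive definite on one of dimension `s`; as these dimensions add up to
`ns`, they are exactly the numbers of negative and of positive eigenvalues.
-/

open Matrix BigOperators

noncomputable section

open Finset

lemma card_filter_neg_add_card_filter_eq_zero_add_card_filter_pos {m : Type*} [Fintype m]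
    (f : m → ℝ) :
    #{i | f i < 0} + #{i | f i = 0} + #{i | 0 < f i} = Fintype.card m := by
  rw [Finset.card_filter, Finset.card_filter, Finset.card_filter, ← Finset.sum_add_distrib,
    ← Finset.sum_add_distrib, ← Finset.card_univ, Finset.card_eq_sum_ones]
  refine Finset.sum_congr rfl fun i _ => ?_
  rcases lt_trichotomy (f i) 0 with h | h | h
  · simp [h, h.ne, h.not_gt]
  · simp [h]
  · simp [h, h.ne', h.not_gt]

namespace Matrix

variable {m k : Type*} [Fintype m] [DecidableEq m] [Fintype k]

lemma IsHermitian.dotProduct_mulVec_eq_sum_eigenvalues {A : Matrix m m ℝ} (hA : A.IsHermitian)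
    (x : m → ℝ) :
    x ⬝ᵥ A *ᵥ x =
      ∑ i, hA.eigenvalues i * ((star (hA.eigenvectorUnitary : Matrix m m ℝ) *ᵥ x) i) ^ 2 := by
  set U : Matrix m m ℝ := ↑hA.eigenvectorUnitary
  have hxU : x ᵥ* U = star U *ᵥ x := by
    rw [star_eq_conjTranspose, conjTranspose_eq_transpose_of_trivial, mulVec_transpose]
  conv_lhs => rw [hA.spectral_theorem, Unitary.conjStarAlgAut_apply]
  rw [← mulVec_mulVec, ← mulVec_mulVec, dotProduct_mulVec, hxU]
  simp only [dotProduct, mulVec_diagonal, Function.comp_apply, RCLike.ofReal_real_eq_id, id]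
  exact Finset.sum_congr rfl fun i _ => by ring

lemma IsHermitian.card_le_card_filter_pos_mul_eigenvalues {A : Matrix m m ℝ} (hA : A.IsHermitian)
    (σ : ℝ) (X : Matrix m k ℝ) (hX : (σ • (Xᵀ * A * X)).PosDef) :
    Fintype.card k ≤ #{i | 0 < σ * hA.eigenvalues i} := by
  set S : Finset m := {i | 0 < σ * hA.eigenvalues i}
  set U : Matrix m m ℝ := star ↑hA.eigenvectorUnitary
  let L : (k → ℝ) →ₗ[ℝ] (S → ℝ) :=
    LinearMap.funLeft ℝ ℝ (Subtype.val : S → m) ∘ₗ (U * X).mulVecLin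
  have hL : Function.Injective L := by
    rw [← LinearMap.ker_eq_bot, LinearMap.ker_eq_bot']
    intro v hv
    by_contra hv0
    have hpos := hX.dotProduct_mulVec_pos hv0
    rw [star_trivial, smul_mulVec, dotProduct_smul, ← mulVec_mulVec, ← mulVec_mulVec,
      dotProduct_mulVec, vecMul_transpose, hA.dotProduct_mulVec_eq_sum_eigenvalues,
      smul_eq_mul, Finset.mul_sum, mulVec_mulVec] at hpos
    -- `(U * X) *ᵥ v` are the coordinates of `X v` in the eigenbasis; they vanish on `S`.
    refine hpos.not_ge (Finset.sum_nonpos fun i _ => ?_)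
    by_cases hi : i ∈ S
    · have : ((U * X) *ᵥ v) i = 0 := congrFun hv ⟨i, hi⟩
      simp [U, this]
    · have : σ * hA.eigenvalues i ≤ 0 := by simpa [S] using hi
      nlinarith [sq_nonneg (((U * X) *ᵥ v) i)]
  calc Fintype.card k = Module.finrank ℝ (k → ℝ) :=
        (Module.finrank_fintype_fun_eq_card ℝ).symm
    _ ≤ Module.finrank ℝ (S → ℝ) := LinearMap.finrank_le_finrank_of_injective hL
    _ = #S := by simp

lemma transpose_mul_inv_mul_mul_of_transpose_eq {l : Type*} [Fintype l] {D : Matrix m m ℝ}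
    (hD : Dᵀ = D) (hdet : IsUnit D.det) (Z : Matrix m l ℝ) :
    (D * Z)ᵀ * D⁻¹ * (D * Z) = Zᵀ * D * Z := by
  rw [transpose_mul, hD, Matrix.mul_assoc, ← Matrix.mul_assoc D⁻¹, nonsing_inv_mul D hdet,
    Matrix.one_mul, Matrix.mul_assoc]

theorem PosDef.blockDiagonal {κ o : Type*} [Fintype κ] [Fintype o] [DecidableEq o]
    {M : o → Matrix κ κ ℝ} (hM : ∀ i, (M i).PosDef) : (Matrix.blockDiagonal M).PosDef := by
  refine PosDef.of_dotProduct_mulVec_pos (isHermitian_blockDiagonal_iff.2 fun i => (hM i).1)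
    fun x hx => ?_
  have hsplit : star x ⬝ᵥ Matrix.blockDiagonal M *ᵥ x =
      ∑ i, star (fun a => x (a, i)) ⬝ᵥ M i *ᵥ fun a => x (a, i) := by
    simp only [dotProduct, mulVec, blockDiagonal_apply, Fintype.sum_prod_type, Finset.mul_sum,
      ite_mul, zero_mul, Finset.sum_ite_eq, Finset.mem_univ, if_true, Pi.star_apply]
    exact Finset.sum_comm
  obtain ⟨⟨a, i⟩, hai⟩ := Function.ne_iff.1 hx
  rw [hsplit]
  exact Finset.sum_pos' (fun j _ => (hM j).posSemidef.dotProduct_mulVec_nonneg _)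
    ⟨i, Finset.mem_univ _, (hM i).dotProduct_mulVec_pos fun h0 => hai (congrFun h0 a)⟩

end Matrix

section Inertia

open Matrix

variable {m k k' : Type*} [Fintype m] [DecidableEq m] [Fintype k] [Fintype k']

theorem inertia_eq_of_posDef_of_posDef_neg {A : Matrix m m ℝ}
    (hA : A.IsHermitian) (X : Matrix m k ℝ) (Y : Matrix m k' ℝ) (hX : (Xᵀ * A * X).PosDef)
    (hY : (-(Yᵀ * A * Y)).PosDef) (hcard : Fintype.card k + Fintype.card k' = Fintype.card m) :
    inertia A = (Fintype.card k', 0, Fintype.card k) := by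
  have hpos := hA.card_le_card_filter_pos_mul_eigenvalues 1 X (by rwa [one_smul])
  have hneg := hA.card_le_card_filter_pos_mul_eigenvalues (-1) Y (by rwa [neg_one_smul])
  have hsum := card_filter_neg_add_card_filter_eq_zero_add_card_filter_pos hA.eigenvalues
  simp only [one_mul, neg_one_mul, Left.neg_pos_iff] at hpos hneg
  rw [inertia, dif_pos hA]
  ext <;> simp only <;> omega

theorem inertia_inv_eq_of_posDef_of_posDef_neg {D : Matrix m m ℝ}
    (hD : D.IsHermitian) (hdet : IsUnit D.det) (X : Matrix m k ℝ) (Y : Matrix m k' ℝ)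
    (hX : (Xᵀ * D * X).PosDef) (hY : (-(Yᵀ * D * Y)).PosDef)
    (hcard : Fintype.card k + Fintype.card k' = Fintype.card m) :
    inertia D⁻¹ = (Fintype.card k', 0, Fintype.card k) := by
  have hDT : Dᵀ = D := by simpa [conjTranspose_eq_transpose_of_trivial] using hD.eq
  refine inertia_eq_of_posDef_of_posDef_neg hD.inv (D * X) (D * Y) ?_ ?_ hcard
  · rwa [transpose_mul_inv_mul_mul_of_transpose_eq hDT hdet]
  · rwa [transpose_mul_inv_mul_mul_of_transpose_eq hDT hdet]

end Inertia

namespace SimpleGraph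

variable {V M : Type*} {G : SimpleGraph V}

def Walk.weight [AddCommMonoid M] (W : V → V → M) {u v : V} (p : G.Walk u v) : M :=
  (p.darts.map fun d => W d.fst d.snd).sum

namespace Walk

section AddCommMonoid

variable [AddCommMonoid M] (W : V → V → M)

@[simp]
lemma weight_nil {u : V} : (nil : G.Walk u u).weight W = 0 := rfl

@[simp]
lemma weight_cons {u v w : V} (h : G.Adj u v) (p : G.Walk v w) :
    (cons h p).weight W = W u v + p.weight W := by
  simp [weight]

lemma weight_concat {u v w : V} (p : G.Walk u v) (h : G.Adj v w) :
    (p.concat h).weight W = p.weight W + W v w := by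
  simp [weight, darts_concat]

lemma weight_reverse (hW : ∀ u v, W u v = W v u) {u v : V} (p : G.Walk u v) :
    p.reverse.weight W = p.weight W := by
  induction p with
  | nil => rfl
  | cons h p ih => rw [reverse_cons, ← concat_eq_append, weight_concat, ih, weight_cons, hW,
      add_comm]

end AddCommMonoid

lemma weight_transpose {κ : Type*} {W : V → V → Matrix κ κ ℝ}
    (hW : ∀ u v, G.Adj u v → (W u v)ᵀ = W u v) {u v : V} (p : G.Walk u v) :
    (p.weight W)ᵀ = p.weight W := by
  induction p with
  | nil => simp
  | cons h p ih => rw [weight_cons, Matrix.transpose_add, hW _ _ h, ih]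

end Walk

namespace IsTree

variable (hT : G.IsTree)

def path (u v : V) : G.Walk u v := (hT.existsUnique_path u v).choose

lemma isPath_path (u v : V) : (hT.path u v).IsPath := (hT.existsUnique_path u v).choose_spec.1

lemma eq_path {u v : V} {p : G.Walk u v} (hp : p.IsPath) : p = hT.path u v :=
  (hT.existsUnique_path u v).choose_spec.2 p hp

lemma support_path_subset [DecidableEq V] {u v : V} (p : G.Walk u v) :
    (hT.path u v).support ⊆ p.support := by
  rw [← hT.eq_path p.bypass_isPath]
  exact p.support_bypass_subset_support

def weightedDist [AddCommMonoid M] (W : V → V → M) (u v : V) : M :=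
  (hT.path u v).weight W

section weightedDist

variable [AddCommMonoid M] (W : V → V → M)

lemma weightedDist_eq_weight {u v : V} {p : G.Walk u v} (hp : p.IsPath) :
    hT.weightedDist W u v = p.weight W := by
  rw [weightedDist, ← hT.eq_path hp]

@[simp]
lemma weightedDist_self (u : V) : hT.weightedDist W u u = 0 := by
  rw [hT.weightedDist_eq_weight W Walk.IsPath.nil, Walk.weight_nil]

lemma weightedDist_comm (hW : ∀ u v, W u v = W v u) (u v : V) :
    hT.weightedDist W v u = hT.weightedDist W u v := by
  rw [hT.weightedDist_eq_weight W (hT.isPath_path u v).reverse, Walk.weight_reverse W hW,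
    weightedDist]

lemma weightedDist_eq_add_of_mem_support {u v w : V} (h : G.Adj v w)
    (hv : v ∈ (hT.path u w).support) :
    hT.weightedDist W u w = hT.weightedDist W u v + W v w := by
  rw [weightedDist, hT.isAcyclic.path_concat (hT.isPath_path u v) (hT.isPath_path u w) h hv,
    Walk.weight_concat, weightedDist]

end weightedDist

variable (r : V)

def parent (k : V) : V := (hT.path k r).snd

variable {r}

lemma adj_parent {k : V} (hk : k ≠ r) : G.Adj k (hT.parent r k) :=
  Walk.adj_snd (Walk.not_nil_of_ne hk)

lemma path_eq_cons {k : V} (hk : k ≠ r) :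
    hT.path k r = Walk.cons (hT.adj_parent hk) (hT.path (hT.parent r k) r) :=
  ((hT.path k r).cons_tail_eq (Walk.not_nil_of_ne hk)).symm.trans
    (congrArg _ (hT.eq_path (hT.isPath_path k r).tail))

lemma notMem_support_path_parent {k : V} (hk : k ≠ r) :
    k ∉ (hT.path (hT.parent r k) r).support := by
  have := hT.isPath_path k r
  rw [hT.path_eq_cons hk, Walk.cons_isPath_iff] at this
  exact this.2

lemma mem_support_path_parent_iff [DecidableEq V] {k : V} (hk : k ≠ r) (x : V) :
    k ∈ (hT.path x (hT.parent r k)).support ↔ k ∈ (hT.path x r).support := by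
  have hk' := hT.notMem_support_path_parent hk
  constructor
  · intro h
    by_contra h'
    have := hT.support_path_subset ((hT.path x r).append (hT.path (hT.parent r k) r).reverse) h
    rw [Walk.support_append, List.mem_append, Walk.support_reverse, List.tail_reverse,
      List.mem_reverse] at this
    exact this.elim h' fun h'' => hk' (List.mem_of_mem_dropLast h'')
  · intro h
    have :=
      hT.support_path_subset ((hT.path x (hT.parent r k)).append (hT.path (hT.parent r k) r)) h
    rw [Walk.support_append, List.mem_append] at this
    exact this.resolve_right fun h'' => hk' (List.mem_of_mem_tail h'')

section AddCommGroup

variable {M : Type*} [AddCommGroup M] {W : V → V → M} (hW : ∀ u v, W u v = W v u)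
include hW

-- `k ∈ (hT.path x r).support` says that `x` lies in the subtree below `k`.
lemma weightedDist_sub_weightedDist_parent [DecidableEq V] {k : V} (hk : k ≠ r) (x : V) :
    hT.weightedDist W x k - hT.weightedDist W x (hT.parent r k) =
      if k ∈ (hT.path x r).support then -W (hT.parent r k) k else W (hT.parent r k) k := by
  have hadj := hT.adj_parent hk
  split_ifs with hx
  · rw [hT.weightedDist_eq_add_of_mem_support W hadj ((hT.mem_support_path_parent_iff hk x).2 hx),
      hW]
    abel
  · have hpar : hT.parent r k ∈ (hT.path x k).support :=
      hT.isAcyclic.mem_support_of_ne_mem_support_of_adj_of_isPath (hT.isPath_path x k)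
        (hT.isPath_path x _) hadj (by rwa [hT.mem_support_path_parent_iff hk x])
    rw [hT.weightedDist_eq_add_of_mem_support W hadj.symm hpar]
    abel

lemma weightedDist_root_sub_weightedDist_parent [DecidableEq V] {k : V} (hk : k ≠ r) :
    hT.weightedDist W r k - hT.weightedDist W r (hT.parent r k) = W (hT.parent r k) k := by
  have hr : k ∉ (hT.path r r).support := by
    rw [← hT.eq_path Walk.IsPath.nil, Walk.support_nil, List.mem_singleton]
    exact hk
  rw [hT.weightedDist_sub_weightedDist_parent hW hk, if_neg hr]

lemma weightedDist_sub_weightedDist_parent_self [DecidableEq V] {k : V} (hk : k ≠ r) :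
    hT.weightedDist W k k - hT.weightedDist W k (hT.parent r k) = -W (hT.parent r k) k := by
  rw [hT.weightedDist_sub_weightedDist_parent hW hk, if_pos (Walk.start_mem_support _)]

lemma weightedDist_parent_sub_weightedDist_parent [DecidableEq V] {k : V} (hk : k ≠ r) :
    hT.weightedDist W (hT.parent r k) k - hT.weightedDist W (hT.parent r k) (hT.parent r k) =
      W (hT.parent r k) k := by
  rw [hT.weightedDist_sub_weightedDist_parent hW hk, if_neg (hT.notMem_support_path_parent hk)]

lemma weightedDist_sub_weightedDist_parent_of_ne [DecidableEq V] {k l : V} (hk : k ≠ r)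
    (hl : l ≠ r) (hkl : k ≠ l) :
    hT.weightedDist W k l - hT.weightedDist W k (hT.parent r l) =
      hT.weightedDist W (hT.parent r k) l -
        hT.weightedDist W (hT.parent r k) (hT.parent r l) := by
  rw [hT.weightedDist_sub_weightedDist_parent hW hl, hT.weightedDist_sub_weightedDist_parent hW hl,
    hT.path_eq_cons hk, Walk.support_cons]
  simp only [List.mem_cons, hkl.symm, false_or]

end AddCommGroup

end IsTree

end SimpleGraph

namespace Matrix

variable {V : Type*} (κ : Type*) [DecidableEq V] [DecidableEq κ]

def blockCol (i : V) : Matrix (V × κ) κ ℝ :=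
  (1 : Matrix (V × κ) (V × κ) ℝ).submatrix id (Prod.mk i)

variable {κ}

lemma blockCol_transpose_mul_mul_blockCol [Fintype V] [Fintype κ]
    (D : Matrix (V × κ) (V × κ) ℝ) (i j : V) :
    (blockCol κ i)ᵀ * D * blockCol κ j = D.submatrix (Prod.mk i) (Prod.mk j) := by
  ext a b
  simp [blockCol, mul_apply, one_apply]

end Matrix

namespace SimpleGraph.IsTree

open Matrix

section BlockDistanceMatrix

variable {V κ : Type*} {G : SimpleGraph V} (hT : G.IsTree) {W : V → V → Matrix κ κ ℝ}
  {D : Matrix (V × κ) (V × κ) ℝ}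
  (hD : ∀ i j, D.submatrix (Prod.mk i) (Prod.mk j) = hT.weightedDist W i j)
include hD

lemma isHermitian_of_submatrix_eq_weightedDist (hW : ∀ u v, W u v = W v u)
    (hWsymm : ∀ u v, G.Adj u v → (W u v)ᵀ = W u v) : D.IsHermitian := by
  rw [IsHermitian, conjTranspose_eq_transpose_of_trivial]
  ext ⟨i, a⟩ ⟨j, b⟩
  calc D (j, b) (i, a) = (hT.weightedDist W j i)ᵀ a b := congrFun₂ (hD j i) b a
    _ = D (i, a) (j, b) := by
      rw [hT.weightedDist_comm W hW, weightedDist, Walk.weight_transpose hWsymm, ← weightedDist,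
        ← hD]
      rfl

lemma nonempty_erase_of_isUnit_det [Fintype V] [DecidableEq V] [Fintype κ] [DecidableEq κ]
    [Nonempty κ] (r : V) (hdet : IsUnit D.det) : (univ.erase r).Nonempty := by
  by_contra h
  have hr (i : V) : i = r :=
    by_contra fun hi => h ⟨i, Finset.mem_erase.2 ⟨hi, Finset.mem_univ i⟩⟩
  have hD0 : D = 0 := by
    ext ⟨i, a⟩ ⟨j, b⟩
    rw [hr i, hr j]
    simpa using congrFun₂ (hD r r) a b
  have : Nonempty V := ⟨r⟩
  rw [hD0, det_zero] at hdet
  exact not_isUnit_zero hdet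

end BlockDistanceMatrix

section TestBlocks

variable {V : Type*} (κ : Type*) [Fintype V] [DecidableEq V] [Fintype κ] [DecidableEq κ]
  {G : SimpleGraph V} (hT : G.IsTree) (r : V)

def edgeBlock (k : V) : Matrix (V × κ) κ ℝ := blockCol κ k - blockCol κ (hT.parent r k)

def tauBlock : Matrix (V × κ) κ ℝ :=
  blockCol κ r + (1 / 2 : ℝ) • ∑ k ∈ univ.erase r, hT.edgeBlock κ r k

def edgeBlocks : Matrix (V × κ) (κ × {k // k ≠ r}) ℝ :=
  of fun p q => hT.edgeBlock κ r q.2 p q.1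

variable {κ r} {W : V → V → Matrix κ κ ℝ} (hW : ∀ u v, W u v = W v u)
  {D : Matrix (V × κ) (V × κ) ℝ}
  (hD : ∀ i j, D.submatrix (Prod.mk i) (Prod.mk j) = hT.weightedDist W i j)
include hW hD

lemma blockCol_transpose_mul_mul_edgeBlock {k : V} (hk : k ≠ r) :
    (blockCol κ r)ᵀ * D * hT.edgeBlock κ r k = W (hT.parent r k) k := by
  rw [edgeBlock, Matrix.mul_sub, blockCol_transpose_mul_mul_blockCol,
    blockCol_transpose_mul_mul_blockCol, hD, hD,
    hT.weightedDist_root_sub_weightedDist_parent hW hk]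

lemma edgeBlock_transpose_mul_mul_blockCol {k : V} (hk : k ≠ r) :
    (hT.edgeBlock κ r k)ᵀ * D * blockCol κ r = W (hT.parent r k) k := by
  rw [edgeBlock, transpose_sub, Matrix.sub_mul, Matrix.sub_mul,
    blockCol_transpose_mul_mul_blockCol, blockCol_transpose_mul_mul_blockCol, hD, hD,
    hT.weightedDist_comm W hW r, hT.weightedDist_comm W hW r,
    hT.weightedDist_root_sub_weightedDist_parent hW hk]

lemma edgeBlock_transpose_mul_mul_edgeBlock {k l : V} (hk : k ≠ r) (hl : l ≠ r) :
    (hT.edgeBlock κ r k)ᵀ * D * hT.edgeBlock κ r l =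
      if k = l then -(2 : ℝ) • W (hT.parent r k) k else 0 := by
  have hexpand : (hT.edgeBlock κ r k)ᵀ * D * hT.edgeBlock κ r l =
      (hT.weightedDist W k l - hT.weightedDist W k (hT.parent r l)) -
        (hT.weightedDist W (hT.parent r k) l -
          hT.weightedDist W (hT.parent r k) (hT.parent r l)) := by
    simp only [edgeBlock, transpose_sub, Matrix.sub_mul, Matrix.mul_sub,
      blockCol_transpose_mul_mul_blockCol, hD]
    abel
  rw [hexpand]
  split_ifs with hkl
  · subst hkl
    rw [hT.weightedDist_sub_weightedDist_parent_self hW hk,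
      hT.weightedDist_parent_sub_weightedDist_parent hW hk]
    module
  · rw [hT.weightedDist_sub_weightedDist_parent_of_ne hW hk hl hkl, sub_self]

lemma tauBlock_transpose_mul_mul_tauBlock :
    (hT.tauBlock κ r)ᵀ * D * hT.tauBlock κ r =
      (1 / 2 : ℝ) • ∑ k ∈ univ.erase r, W (hT.parent r k) k := by
  have hne : ∀ k ∈ univ.erase r, k ≠ r := fun k hk => Finset.ne_of_mem_erase hk
  set S := ∑ k ∈ univ.erase r, hT.edgeBlock κ r k
  have hrS : (blockCol κ r)ᵀ * D * S = ∑ k ∈ univ.erase r, W (hT.parent r k) k := by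
    rw [Matrix.mul_sum]
    exact Finset.sum_congr rfl fun k hk => hT.blockCol_transpose_mul_mul_edgeBlock hW hD (hne k hk)
  have hSr : Sᵀ * D * blockCol κ r = ∑ k ∈ univ.erase r, W (hT.parent r k) k := by
    rw [transpose_sum, Matrix.sum_mul, Matrix.sum_mul]
    exact Finset.sum_congr rfl fun k hk => hT.edgeBlock_transpose_mul_mul_blockCol hW hD (hne k hk)
  have hSS : Sᵀ * D * S = -(2 : ℝ) • ∑ k ∈ univ.erase r, W (hT.parent r k) k := by
    rw [transpose_sum, Matrix.sum_mul, Matrix.sum_mul, Finset.smul_sum]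
    refine Finset.sum_congr rfl fun k hk => ?_
    rw [Matrix.mul_sum, Finset.sum_congr rfl fun l hl =>
      hT.edgeBlock_transpose_mul_mul_edgeBlock hW hD (hne k hk) (hne l hl), Finset.sum_ite_eq,
      if_pos hk]
  rw [tauBlock, transpose_add, transpose_smul, Matrix.add_mul, Matrix.add_mul, Matrix.mul_add,
    Matrix.mul_add]
  simp only [Matrix.smul_mul, Matrix.mul_smul]
  rw [hrS, hSr, hSS, blockCol_transpose_mul_mul_blockCol, hD, weightedDist_self]
  module

lemma edgeBlocks_transpose_mul_mul_edgeBlocks :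
    (hT.edgeBlocks κ r)ᵀ * D * hT.edgeBlocks κ r =
      -(2 : ℝ) • blockDiagonal fun k : {k // k ≠ r} => W (hT.parent r k) k := by
  ext ⟨a, k⟩ ⟨b, l⟩
  have hentry : ((hT.edgeBlocks κ r)ᵀ * D * hT.edgeBlocks κ r) (a, k) (b, l) =
      ((hT.edgeBlock κ r k)ᵀ * D * hT.edgeBlock κ r l) a b := rfl
  rw [hentry, hT.edgeBlock_transpose_mul_mul_edgeBlock hW hD k.2 l.2]
  by_cases hkl : k = l
  · subst hkl
    simp
  · simp [blockDiagonal_apply, hkl, Subtype.ext_iff.not.mp hkl]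

end TestBlocks

end SimpleGraph.IsTree

open SimpleGraph Matrix

theorem stmt13_general (n s : ℕ) (hs : 0 < s)
    (T : SimpleGraph (Fin n)) (hT : T.IsTree)
    (Wt : Fin n → Fin n → Matrix (Fin s) (Fin s) ℝ)
    (hWtsym : ∀ i j, Wt i j = Wt j i)
    (hWtpd : ∀ i j, T.Adj i j → (Wt i j).PosDef)
    (D : Matrix (Fin n × Fin s) (Fin n × Fin s) ℝ)
    (hD : ∀ (i j : Fin n) (p : T.Walk i j), p.IsPath →
      ∀ a b : Fin s, D (i, a) (j, b) =
        ((p.darts.map fun d => Wt d.toProd.1 d.toProd.2).sum) a b)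
    (hDdet : IsUnit D.det) :
    inertia D⁻¹ = (n * s - s, 0, s) := by
  obtain ⟨r⟩ := hT.connected.nonempty
  have : Nonempty (Fin s) := ⟨⟨0, hs⟩⟩
  have hblock (i j : Fin n) : D.submatrix (Prod.mk i) (Prod.mk j) = hT.weightedDist Wt i j := by
    ext a b
    exact hD i j _ (hT.isPath_path i j) a b
  have hedge (k : Fin n) (hk : k ≠ r) : (Wt (hT.parent r k) k).PosDef :=
    hWtpd _ _ (hT.adj_parent hk).symm
  have hDherm := hT.isHermitian_of_submatrix_eq_weightedDist hblock hWtsym fun u v h => by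
    simpa [conjTranspose_eq_transpose_of_trivial] using (hWtpd u v h).isHermitian.eq
  have hcardE : Fintype.card (Fin s × {k // k ≠ r}) = n * s - s := by
    simp [Nat.mul_sub_one, mul_comm]
  have hcard : Fintype.card (Fin s) + Fintype.card (Fin s × {k // k ≠ r}) =
      Fintype.card (Fin n × Fin s) := by
    rw [hcardE, Fintype.card_prod, Fintype.card_fin, Fintype.card_fin]
    have := Nat.le_mul_of_pos_left s r.pos
    omega
  rw [inertia_inv_eq_of_posDef_of_posDef_neg hDherm hDdet (hT.tauBlock (Fin s) r)
    (hT.edgeBlocks (Fin s) r) ?_ ?_ hcard]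
  · rw [hcardE, Fintype.card_fin]
  · rw [hT.tauBlock_transpose_mul_mul_tauBlock hWtsym hblock]
    exact (posDef_sum (hT.nonempty_erase_of_isUnit_det hblock r hDdet)
      fun k hk => hedge k (Finset.ne_of_mem_erase hk)).smul (by norm_num)
  · rw [hT.edgeBlocks_transpose_mul_mul_edgeBlocks hWtsym hblock, neg_smul, neg_neg]
    exact (PosDef.blockDiagonal fun k : {k // k ≠ r} => hedge k k.2).smul two_pos

/-- The inertia of D⁻¹ equals (ns − s, 0, s). -/
theorem stmt13 (n s : ℕ) (hn : 0 < n) (hs : 0 < s)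
    (T : SimpleGraph (Fin n)) (hT : T.IsTree)
    (Wt : Fin n → Fin n → Matrix (Fin s) (Fin s) ℝ)
    (hWtsym : ∀ i j, Wt i j = Wt j i)
    (hWtpd : ∀ i j, T.Adj i j → (Wt i j).PosDef)
    (D : Matrix (Fin n × Fin s) (Fin n × Fin s) ℝ)
    (hD : ∀ (i j : Fin n) (p : T.Walk i j), p.IsPath →
      ∀ a b : Fin s, D (i, a) (j, b) =
        ((p.darts.map fun d => Wt d.toProd.1 d.toProd.2).sum) a b)
    (hDdet : IsUnit D.det) :
    inertia D⁻¹ = (n * s - s, 0, s) :=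
  stmt13_general n s hs T hT Wt hWtsym hWtpd D hD hDdet
end
end
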